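/- arXiv:2302.13723 — 3 statements merged into one kernel-verified Lean document; each statement's English description precedes it below -/
import Mathlib

section
/- There exists a dimensional constant C(n) such that for every locally integrable f on ℝⁿ and every closed axis-parallel rectangle R (a product of n closed intervals of positive length) with eccentricity e(R) (the ratio of its longest side length to its shortest side length), one has O(f,R) ≤ C(n) (1 + log e(R)) ‖f‖_{BMO(ℝⁿ)}. -/
open MeasureTheory Set Filter
open scoped ENNReal Topology

/-- Mean oscillation of `f` over `A ⊆ ℝⁿ`. -/
noncomputable def oscN {n : ℕ} (f : (Fin n → ℝ) → ℝ) (A : Set (Fin n → ℝ)) : ℝ :=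
  ⨍ x in A, |f x - ⨍ y in A, f y|

/-- The closed axis-parallel cube with lower corner `a` and side length `l`. -/
def cube {n : ℕ} (a : Fin n → ℝ) (l : ℝ) : Set (Fin n → ℝ) :=
  Set.Icc a (fun i => a i + l)

/-- BMO(ℝⁿ) seminorm. -/
noncomputable def bmoN {n : ℕ} (f : (Fin n → ℝ) → ℝ) : ℝ≥0∞ :=
  ⨆ (a : Fin n → ℝ) (l : ℝ) (_ : 0 < l), ENNReal.ofReal (oscN f (cube a l))

/-!
Cut `R = Icc a b` into a grid of rectangles whose sides lie in `[s/2, s]`, where `s` and `L` are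
the shortest and longest sides of `R`. Write `L = 2^m t` with `t ∈ [s, 2s]`, so `m ≤ 2 log (L/s)`.
A cell with lower corner `p` lies in the sup-norm ball `B(p, t)`, a cube of comparable volume, and
the doubling chain `B(p, t) ⊆ B(p, 2t) ⊆ ⋯ ⊆ B(p, L) ⊆ B(a, 2L)` consists of cubes, consecutive
averages differing by at most `2ⁿ ‖f‖_BMO`. So with `c` the average over `B(a, 2L)`, every cell
has `⨍ |f - c| ≲ (8ⁿ + (m + 1) 2ⁿ) ‖f‖_BMO`, hence so does `R`, and `O(f, R) ≤ 2 ⨍_R |f - c|`.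
-/

open Metric

section SetAverage

variable {α : Type*} [MeasurableSpace α] {μ : Measure α} {s t : Set α} {f g : α → ℝ}

theorem abs_setAverage_le_setAverage_abs (f : α → ℝ) (s : Set α) :
    |⨍ x in s, f x ∂μ| ≤ ⨍ x in s, |f x| ∂μ := by
  rw [setAverage_eq, setAverage_eq, smul_eq_mul, smul_eq_mul, abs_mul,
    abs_of_nonneg (inv_nonneg.2 measureReal_nonneg)]
  gcongr
  exact abs_integral_le_integral_abs

theorem setAverage_add_const (hs₀ : μ s ≠ 0) (hs : μ s ≠ ∞) (hf : IntegrableOn f s μ) (c : ℝ) :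
    ⨍ x in s, (f x + c) ∂μ = ⨍ x in s, f x ∂μ + c := by
  have hpos : 0 < μ.real s := ENNReal.toReal_pos hs₀ hs
  rw [setAverage_eq, setAverage_eq, integral_add hf (integrableOn_const hs), setIntegral_const,
    smul_eq_mul, smul_eq_mul, smul_eq_mul]
  field_simp

theorem setAverage_sub_const (hs₀ : μ s ≠ 0) (hs : μ s ≠ ∞) (hf : IntegrableOn f s μ) (c : ℝ) :
    ⨍ x in s, (f x - c) ∂μ = ⨍ x in s, f x ∂μ - c := by
  simpa only [sub_eq_add_neg] using setAverage_add_const hs₀ hs hf (-c)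

theorem setAverage_mono (hf : IntegrableOn f s μ) (hg : IntegrableOn g s μ) (h : f ≤ g) :
    ⨍ x in s, f x ∂μ ≤ ⨍ x in s, g x ∂μ := by
  rw [setAverage_eq, setAverage_eq, smul_eq_mul, smul_eq_mul]
  exact mul_le_mul_of_nonneg_left (integral_mono hf hg h) (inv_nonneg.2 measureReal_nonneg)

theorem abs_setAverage_sub_le (hs₀ : μ s ≠ 0) (hs : μ s ≠ ∞) (hf : IntegrableOn f s μ) (c : ℝ) :
    |⨍ x in s, f x ∂μ - c| ≤ ⨍ x in s, |f x - c| ∂μ := by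
  rw [← setAverage_sub_const hs₀ hs hf]
  exact abs_setAverage_le_setAverage_abs _ s

theorem setAverage_abs_sub_le_add (hs₀ : μ s ≠ 0) (hs : μ s ≠ ∞) (hf : IntegrableOn f s μ)
    (c d : ℝ) : ⨍ x in s, |f x - c| ∂μ ≤ ⨍ x in s, |f x - d| ∂μ + |d - c| := by
  have hfd : IntegrableOn (fun x => |f x - d|) s μ := (hf.sub (integrableOn_const hs)).abs
  rw [← setAverage_add_const hs₀ hs hfd]
  exact setAverage_mono (hf.sub (integrableOn_const hs)).abs (hfd.add (integrableOn_const hs))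
    fun x => abs_sub_le _ _ _

theorem setAverage_abs_sub_setAverage_le_two_mul (hs₀ : μ s ≠ 0) (hs : μ s ≠ ∞)
    (hf : IntegrableOn f s μ) (c : ℝ) :
    ⨍ x in s, |f x - ⨍ y in s, f y ∂μ| ∂μ ≤ 2 * ⨍ x in s, |f x - c| ∂μ := by
  have h := abs_setAverage_sub_le hs₀ hs hf c
  rw [abs_sub_comm] at h
  linarith [setAverage_abs_sub_le_add hs₀ hs hf (⨍ y in s, f y ∂μ) c]

theorem setAverage_le_mul_setAverage_of_subset (hst : s ⊆ t) (hs₀ : μ s ≠ 0) (ht : μ t ≠ ∞)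
    (hg : 0 ≤ g) (hgt : IntegrableOn g t μ) {ρ : ℝ} (hρ : μ.real t ≤ ρ * μ.real s) :
    ⨍ x in s, g x ∂μ ≤ ρ * ⨍ x in t, g x ∂μ := by
  have hs : 0 < μ.real s := ENNReal.toReal_pos hs₀ (ne_top_of_le_ne_top ht (measure_mono hst))
  have hint : ∫ x in s, g x ∂μ ≤ ∫ x in t, g x ∂μ :=
    setIntegral_mono_set hgt (Eventually.of_forall hg) hst.eventuallyLE
  have hnonneg : 0 ≤ ∫ x in t, g x ∂μ := integral_nonneg hg
  rw [setAverage_eq, setAverage_eq, smul_eq_mul, smul_eq_mul, inv_mul_le_iff₀ hs]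
  calc ∫ x in s, g x ∂μ ≤ ∫ x in t, g x ∂μ := hint
    _ = μ.real t * ((μ.real t)⁻¹ * ∫ x in t, g x ∂μ) := by
        rw [← mul_assoc, mul_inv_cancel₀ (hs.trans_le (measureReal_mono hst ht)).ne', one_mul]
    _ ≤ ρ * μ.real s * ((μ.real t)⁻¹ * ∫ x in t, g x ∂μ) := by gcongr
    _ = μ.real s * (ρ * ((μ.real t)⁻¹ * ∫ x in t, g x ∂μ)) := by ring

theorem abs_setAverage_sub_setAverage_le (hst : s ⊆ t) (hs₀ : μ s ≠ 0) (ht : μ t ≠ ∞)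
    (hf : IntegrableOn f t μ) {ρ : ℝ} (hρ : μ.real t ≤ ρ * μ.real s) :
    |⨍ x in s, f x ∂μ - ⨍ x in t, f x ∂μ| ≤ ρ * ⨍ x in t, |f x - ⨍ y in t, f y ∂μ| ∂μ :=
  (abs_setAverage_sub_le hs₀ (ne_top_of_le_ne_top ht (measure_mono hst)) (hf.mono_set hst) _).trans
    (setAverage_le_mul_setAverage_of_subset hst hs₀ ht (fun _ => abs_nonneg _)
      (hf.sub (integrableOn_const ht)).abs hρ)

theorem setAverage_le_of_subset_iUnion {ι : Type*} [Fintype ι] {A : ι → Set α}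
    (hsA : s ⊆ ⋃ k, A k) (hA : ∀ k, μ (A k) ≠ ∞)
    (hvol : ∑ k, μ.real (A k) ≤ μ.real s) (hg : 0 ≤ g) (hgA : ∀ k, IntegrableOn g (A k) μ)
    {W : ℝ} (hW₀ : 0 ≤ W) (hW : ∀ k, ⨍ x in A k, g x ∂μ ≤ W) :
    ⨍ x in s, g x ∂μ ≤ W := by
  have hle : μ.restrict s ≤ ∑ k, μ.restrict (A k) :=
    (Measure.restrict_mono hsA le_rfl).trans
      (Measure.restrict_iUnion_le.trans_eq (Measure.sum_fintype _))
  have hint : ∫ x in s, g x ∂μ ≤ ∑ k, ∫ x in A k, g x ∂μ := by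
    rw [← integral_finsetSum_measure fun k _ => hgA k]
    exact integral_mono_measure hle (Eventually.of_forall hg)
      (integrable_finsetSum_measure.2 fun k _ => hgA k)
  have hcell : ∀ k, ∫ x in A k, g x ∂μ ≤ W * μ.real (A k) := fun k => by
    rw [← measure_smul_setAverage g (hA k), smul_eq_mul, mul_comm]
    exact mul_le_mul_of_nonneg_right (hW k) measureReal_nonneg
  rw [setAverage_eq, smul_eq_mul]
  calc (μ.real s)⁻¹ * ∫ x in s, g x ∂μ ≤ (μ.real s)⁻¹ * (W * μ.real s) := by
        gcongr
        calc ∫ x in s, g x ∂μ ≤ ∑ k, W * μ.real (A k) :=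
              hint.trans (Finset.sum_le_sum fun k _ => hcell k)
          _ ≤ W * μ.real s := by rw [← Finset.mul_sum]; gcongr
    _ ≤ W := by
        rcases eq_or_ne (μ.real s) 0 with h | h
        · simp [h, hW₀]
        · rw [mul_comm W, ← mul_assoc, inv_mul_cancel₀ h, one_mul]

end SetAverage

theorem exists_two_pow_mul_eq {s L : ℝ} (hs : 0 < s) (hsL : s ≤ L) :
    ∃ (m : ℕ) (t : ℝ), s ≤ t ∧ t ≤ 2 * s ∧ 2 ^ m * t = L ∧ (m : ℝ) ≤ 2 * Real.log (L / s) := by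
  obtain ⟨m, hm, hm'⟩ := exists_nat_pow_near ((one_le_div hs).2 hsL) one_lt_two
  have hlog := Real.log_le_log (by positivity) hm
  rw [Real.log_pow] at hlog
  rw [le_div_iff₀ hs] at hm
  rw [div_lt_iff₀ hs, pow_succ] at hm'
  refine ⟨m, L / 2 ^ m, ?_, ?_, mul_div_cancel₀ _ (by positivity), ?_⟩
  · rw [le_div_iff₀ (by positivity)]; linarith
  · rw [div_le_iff₀ (by positivity)]; linarith
  · nlinarith [Real.log_two_gt_d9, (Nat.cast_nonneg m : (0 : ℝ) ≤ m)]

theorem exists_nat_div_mem_Icc {s ℓ : ℝ} (hs : 0 < s) (hsℓ : s ≤ ℓ) :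
    ∃ N : ℕ, 0 < N ∧ ℓ / N ∈ Icc (s / 2) s := by
  have hℓs : 1 ≤ ℓ / s := (one_le_div hs).2 hsℓ
  have hN : (0 : ℝ) < ⌈ℓ / s⌉₊ := by positivity
  refine ⟨⌈ℓ / s⌉₊, by exact_mod_cast hN, ?_, ?_⟩
  · have hlt : (⌈ℓ / s⌉₊ : ℝ) * s < 2 * ℓ := by
      have h := mul_lt_mul_of_pos_right
        ((Nat.ceil_lt_add_one (by positivity)).trans_le (by linarith : ℓ / s + 1 ≤ 2 * (ℓ / s))) hs
      rwa [mul_assoc, div_mul_cancel₀ _ hs.ne'] at h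
    rw [le_div_iff₀ hN]
    linarith
  · rw [div_le_iff₀ hN, ← div_le_iff₀' hs]
    exact Nat.le_ceil _

theorem exists_lt_mem_Icc_add_mul {a h x : ℝ} {N : ℕ} (hh : 0 < h) (hN : 0 < N)
    (hx : x ∈ Icc a (a + N * h)) : ∃ k < N, x ∈ Icc (a + k * h) (a + k * h + h) := by
  obtain ⟨hax, hxb⟩ := hx
  set j := ⌊(x - a) / h⌋₊
  have hj : (j : ℝ) * h ≤ x - a :=
    (le_div_iff₀ hh).1 (Nat.floor_le (div_nonneg (sub_nonneg.2 hax) hh.le))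
  have hj' : x - a < (j + 1) * h := (div_lt_iff₀ hh).1 (Nat.lt_floor_add_one _)
  rcases lt_or_ge j N with hjN | hjN
  · exact ⟨j, hjN, by linarith, by linarith⟩
  · have hNj : (N : ℝ) * h ≤ j * h :=
      mul_le_mul_of_nonneg_right (by exact_mod_cast hjN) hh.le
    refine ⟨N - 1, Nat.sub_lt hN one_pos, ?_, ?_⟩ <;> rw [Nat.cast_pred hN] <;> linarith

def gridCell {n : ℕ} (a h : Fin n → ℝ) (k : Fin n → ℕ) : Set (Fin n → ℝ) :=
  Icc (fun i => a i + k i * h i) (fun i => a i + k i * h i + h i)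

section Grid

variable {n : ℕ} {a h : Fin n → ℝ}

theorem Icc_subset_iUnion_gridCell {N : Fin n → ℕ} (hh : ∀ i, 0 < h i) (hN : ∀ i, 0 < N i) :
    Icc a (fun i => a i + N i * h i) ⊆ ⋃ k : (∀ i, Fin (N i)), gridCell a h (fun i => k i) := by
  intro x hx
  choose k hkN hk using fun i => exists_lt_mem_Icc_add_mul (hh i) (hN i) ⟨hx.1 i, hx.2 i⟩
  exact mem_iUnion.2 ⟨fun i => ⟨k i, hkN i⟩, fun i => (hk i).1, fun i => (hk i).2⟩

theorem volume_real_gridCell (a : Fin n → ℝ) (hh : ∀ i, 0 ≤ h i) (k : Fin n → ℕ) :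
    volume.real (gridCell a h k) = ∏ i, h i := by
  rw [gridCell, measureReal_def, Real.volume_Icc_pi_toReal fun i => le_add_of_nonneg_right (hh i)]
  simp only [add_sub_cancel_left]

theorem sum_volume_real_gridCell (a : Fin n → ℝ) (hh : ∀ i, 0 ≤ h i) (N : Fin n → ℕ) :
    ∑ k : (∀ i, Fin (N i)), volume.real (gridCell a h (fun i => k i)) = ∏ i, N i * h i := by
  simp only [volume_real_gridCell a hh, Finset.sum_const, Finset.card_univ, Fintype.card_pi,
    Fintype.card_fin, nsmul_eq_mul, Nat.cast_prod, Finset.prod_mul_distrib]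

theorem setAverage_Icc_le_of_forall_gridCell {N : Fin n → ℕ} (hh : ∀ i, 0 < h i)
    (hN : ∀ i, 0 < N i) {g : (Fin n → ℝ) → ℝ} (hg₀ : 0 ≤ g)
    (hg : ∀ p q, IntegrableOn g (Icc p q)) {W : ℝ} (hW₀ : 0 ≤ W)
    (hW : ∀ k : (∀ i, Fin (N i)), ⨍ x in gridCell a h (fun i => k i), g x ≤ W) :
    ⨍ x in Icc a (fun i => a i + N i * h i), g x ≤ W := by
  refine setAverage_le_of_subset_iUnion (A := fun k : (∀ i, Fin (N i)) => gridCell a h (k ·))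
    (Icc_subset_iUnion_gridCell hh hN) (fun _ => isCompact_Icc.measure_lt_top.ne) ?_ hg₀
    (fun _ => hg _ _) hW₀ hW
  rw [sum_volume_real_gridCell a (fun i => (hh i).le), measureReal_def,
    Real.volume_Icc_pi_toReal fun i =>
      le_add_of_nonneg_right (mul_nonneg (Nat.cast_nonneg _) (hh i).le)]
  simp only [add_sub_cancel_left, le_refl]

end Grid

section Euclidean

variable {n : ℕ} {f : (Fin n → ℝ) → ℝ} {M : ℝ}

theorem oscN_nonneg (f : (Fin n → ℝ) → ℝ) (A : Set (Fin n → ℝ)) : 0 ≤ oscN f A := by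
  rw [oscN, setAverage_eq, smul_eq_mul]
  exact mul_nonneg (inv_nonneg.2 measureReal_nonneg) (integral_nonneg fun _ => abs_nonneg _)

theorem closedBall_eq_cube (p : Fin n → ℝ) {r : ℝ} (hr : 0 ≤ r) :
    closedBall p r = cube (fun i => p i - r) (2 * r) := by
  ext x
  simp only [mem_closedBall, dist_pi_le_iff hr, Real.dist_eq, abs_le, cube, mem_Icc,
    Pi.le_def, ← forall_and]
  exact forall_congr' fun i => by constructor <;> intro h <;> constructor <;> linarith [h.1, h.2]

theorem oscN_closedBall_le_toReal_bmoN (hB : bmoN f ≠ ⊤) (p : Fin n → ℝ) {r : ℝ} (hr : 0 < r) :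
    oscN f (closedBall p r) ≤ (bmoN f).toReal := by
  rw [← ENNReal.ofReal_le_iff_le_toReal hB, closedBall_eq_cube p hr.le]
  exact le_iSup₂_of_le (fun i => p i - r) (2 * r) (le_iSup_of_le (by positivity) le_rfl)

theorem volume_real_closedBall_pi (p : Fin n → ℝ) {r : ℝ} (hr : 0 ≤ r) :
    volume.real (closedBall p r) = (2 * r) ^ n := by
  rw [measureReal_def, Real.volume_pi_closedBall p hr, Fintype.card_fin,
    ENNReal.toReal_ofReal (by positivity)]

variable (hf : LocallyIntegrable f) (hM : ∀ p r, 0 < r → oscN f (closedBall p r) ≤ M)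
include hf hM

theorem abs_setAverage_closedBall_sub_le {p q : Fin n → ℝ} {r : ℝ} (hr : 0 < r)
    (hpq : closedBall p r ⊆ closedBall q (2 * r)) :
    |(⨍ x in closedBall p r, f x) - ⨍ x in closedBall q (2 * r), f x| ≤ 2 ^ n * M := by
  have hρ : volume.real (closedBall q (2 * r)) ≤
      2 ^ n * volume.real (closedBall p r) := by
    rw [volume_real_closedBall_pi q (by positivity), volume_real_closedBall_pi p hr.le, ← mul_pow]
  refine (abs_setAverage_sub_setAverage_le hpq (measure_closedBall_pos volume p hr).ne'
    measure_closedBall_lt_top.ne (hf.integrableOn_isCompact (isCompact_closedBall _ _)) hρ).trans ?_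
  exact mul_le_mul_of_nonneg_left (hM q _ (by positivity)) (by positivity)

theorem abs_setAverage_closedBall_sub_closedBall_pow_le (p : Fin n → ℝ) {r : ℝ} (hr : 0 < r)
    (m : ℕ) :
    |(⨍ x in closedBall p r, f x) - ⨍ x in closedBall p (2 ^ m * r), f x| ≤
      m * (2 ^ n * M) := by
  have h := dist_le_range_sum_of_dist_le (f := fun j => ⨍ x in closedBall p (2 ^ j * r), f x)
    (d := fun _ => 2 ^ n * M) m fun {j} _ => by
      rw [Real.dist_eq, pow_succ, mul_comm _ (2 : ℝ), mul_assoc]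
      exact abs_setAverage_closedBall_sub_le hf hM (r := 2 ^ j * r) (by positivity)
        (closedBall_subset_closedBall (by linarith [show 0 < 2 ^ j * r by positivity]))
  simpa [Real.dist_eq] using h

theorem setAverage_abs_sub_le_of_subset_closedBall {K : Set (Fin n → ℝ)} {p q : Fin n → ℝ}
    {r ρ : ℝ} {m : ℕ} (hr : 0 < r) (hKp : K ⊆ closedBall p r) (hK₀ : volume K ≠ 0)
    (hρ : (2 * r) ^ n ≤ ρ * volume.real K) (hpq : dist p q ≤ 2 ^ m * r) :
    ⨍ x in K, |f x - ⨍ y in closedBall q (2 ^ (m + 1) * r), f y| ≤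
      (ρ + (m + 1) * 2 ^ n) * M := by
  have hK : volume K ≠ ∞ := ne_top_of_le_ne_top measure_closedBall_lt_top.ne (measure_mono hKp)
  have hfB : IntegrableOn f (closedBall p r) := hf.integrableOn_isCompact (isCompact_closedBall _ _)
  have hρ₀ : 0 ≤ ρ := nonneg_of_mul_nonneg_left ((by positivity : (0 : ℝ) ≤ (2 * r) ^ n).trans hρ)
    (ENNReal.toReal_pos hK₀ hK)
  have hnear : ⨍ x in K, |f x - ⨍ y in closedBall p r, f y| ≤ ρ * M :=
    (setAverage_le_mul_setAverage_of_subset hKp hK₀ measure_closedBall_lt_top.ne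
      (fun _ => abs_nonneg _) (hfB.sub (integrableOn_const measure_closedBall_lt_top.ne)).abs
      (by rwa [volume_real_closedBall_pi p hr.le])).trans
      (mul_le_mul_of_nonneg_left (hM p r hr) hρ₀)
  have hchain := abs_setAverage_closedBall_sub_closedBall_pow_le hf hM p hr m
  have hlast := abs_setAverage_closedBall_sub_le hf hM (r := 2 ^ m * r) (by positivity)
    (closedBall_subset_closedBall' (by linarith) : closedBall p _ ⊆ closedBall q (2 * (2 ^ m * r)))
  rw [← mul_assoc, ← pow_succ'] at hlast
  calc _ ≤ (⨍ x in K, |f x - ⨍ y in closedBall p r, f y|) +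
        |(⨍ y in closedBall p r, f y) - ⨍ y in closedBall q (2 ^ (m + 1) * r), f y| :=
        setAverage_abs_sub_le_add hK₀ hK (hfB.mono_set hKp) _ _
    _ ≤ ρ * M + (m * (2 ^ n * M) + 2 ^ n * M) := by
        gcongr
        exact (abs_sub_le _ _ _).trans (add_le_add hchain hlast)
    _ = _ := by ring

theorem setAverage_abs_sub_gridCell_le {a h q : Fin n → ℝ} {s t : ℝ} {m : ℕ} (k : Fin n → ℕ)
    (hh : ∀ i, h i ∈ Icc (s / 2) s) (hs : 0 < s) (hst : s ≤ t) (hts : t ≤ 2 * s)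
    (hq : dist (fun i => a i + k i * h i) q ≤ 2 ^ m * t) :
    ⨍ x in gridCell a h k, |f x - ⨍ y in closedBall q (2 ^ (m + 1) * t), f y| ≤
      (8 ^ n + (m + 1) * 2 ^ n) * M := by
  have hh₀ : ∀ i, 0 < h i := fun i => by linarith [(hh i).1]
  have hvol := volume_real_gridCell a (fun i => (hh₀ i).le) k
  refine setAverage_abs_sub_le_of_subset_closedBall hf hM (hs.trans_le hst) (fun x hx => ?_) ?_ ?_
    hq
  · refine (dist_pi_le_iff (hs.trans_le hst).le).2 fun i => ?_
    rw [Real.dist_eq, abs_le]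
    constructor <;> linarith [hx.1 i, hx.2 i, (hh i).2]
  · have hpos : 0 < volume.real (gridCell a h k) := hvol ▸ Finset.prod_pos fun i _ => hh₀ i
    exact (ENNReal.toReal_pos_iff.1 hpos).1.ne'
  · calc (2 * t) ^ n = ∏ _i : Fin n, 2 * t := by simp
      _ ≤ ∏ i, 8 * h i := Finset.prod_le_prod (fun _ _ => by linarith)
          fun i _ => by linarith [(hh i).1]
      _ = 8 ^ n * volume.real (gridCell a h k) := by simp [hvol, Finset.prod_mul_distrib]

theorem oscN_Icc_le {a b : Fin n → ℝ} {s L : ℝ} (hs : 0 < s) (hsL : s ≤ L)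
    (hsab : ∀ i, s ≤ b i - a i) (habL : ∀ i, b i - a i ≤ L) :
    oscN f (Icc a b) ≤ 4 * 8 ^ n * (1 + Real.log (L / s)) * M := by
  have hfIcc : ∀ p q, IntegrableOn f (Icc p q) := fun p q => hf.integrableOn_isCompact isCompact_Icc
  obtain ⟨m, t, hst, hts, hLt, hmlog⟩ := exists_two_pow_mul_eq hs hsL
  choose N hN hNs using fun i => exists_nat_div_mem_Icc hs (hsab i)
  set h : Fin n → ℝ := fun i => (b i - a i) / N i
  have hh₀ : ∀ i, 0 < h i := fun i => by linarith [(hNs i).1]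
  have hNh : ∀ i, N i * h i = b i - a i :=
    fun i => mul_div_cancel₀ _ (by exact_mod_cast (hN i).ne')
  have hcorner : ∀ k : (∀ i, Fin (N i)), dist (fun i => a i + (k i : ℕ) * h i) a ≤ 2 ^ m * t := by
    refine fun k => (dist_pi_le_iff (hLt ▸ (hs.trans_le hsL).le)).2 fun i => ?_
    have hk : ((k i : ℕ) : ℝ) * h i ≤ N i * h i :=
      mul_le_mul_of_nonneg_right (by exact_mod_cast (k i).2.le) (hh₀ i).le
    rw [Real.dist_eq, abs_le, hLt]
    constructor <;> nlinarith [hNh i, habL i, hh₀ i]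
  set c := ⨍ y in closedBall a (2 ^ (m + 1) * t), f y
  have hM₀ : 0 ≤ M := (oscN_nonneg f _).trans (hM a 1 one_pos)
  have havg : ⨍ x in Icc a b, |f x - c| ≤ (8 ^ n + (m + 1) * 2 ^ n) * M := by
    have hb : (fun i => a i + N i * h i) = b := funext fun i => by rw [hNh]; ring
    exact hb ▸ setAverage_Icc_le_of_forall_gridCell hh₀ hN (fun _ => abs_nonneg _)
      (fun p q => ((hfIcc p q).sub (integrableOn_const isCompact_Icc.measure_lt_top.ne)).abs)
      (by positivity) fun k => setAverage_abs_sub_gridCell_le hf hM _ hNs hs hst hts (hcorner k)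
  have hR₀ : volume (Icc a b) ≠ 0 := by
    rw [Real.volume_Icc_pi]
    exact Finset.prod_ne_zero_iff.2 fun i _ => (ENNReal.ofReal_pos.2 (by linarith [hsab i])).ne'
  have h28 : (2 : ℝ) ^ n ≤ 8 ^ n := pow_le_pow_left₀ (by norm_num) (by norm_num) n
  calc oscN f (Icc a b) ≤ 2 * ⨍ x in Icc a b, |f x - c| :=
        setAverage_abs_sub_setAverage_le_two_mul hR₀ isCompact_Icc.measure_lt_top.ne (hfIcc a b) c
    _ ≤ 2 * ((8 ^ n + (m + 1) * 8 ^ n) * M) := by gcongr; exact havg.trans (by gcongr)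
    _ = 2 * 8 ^ n * (m + 2) * M := by ring
    _ ≤ 2 * 8 ^ n * (2 * Real.log (L / s) + 2) * M := by gcongr
    _ = 4 * 8 ^ n * (1 + Real.log (L / s)) * M := by ring

end Euclidean

/-- there is a dimensional constant `C(n)` such that for every locally
integrable `f` and every closed axis-parallel rectangle `R = Icc a b` (with `aᵢ < bᵢ`
for all `i`) of eccentricity `e(R)` (ratio of longest to shortest side), one has
`O(f, R) ≤ C(n) (1 + log e(R)) ‖f‖_{BMO(ℝⁿ)}`. -/
theorem osc_on_rectangle_le_eccentricity (n : ℕ) (hn : 1 ≤ n) :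
    ∃ C : ℝ, 0 < C ∧
      ∀ (f : (Fin n → ℝ) → ℝ), LocallyIntegrable f volume →
      ∀ a b : Fin n → ℝ, (∀ i, a i < b i) →
        ENNReal.ofReal (oscN f (Set.Icc a b)) ≤
          ENNReal.ofReal
            (C * (1 + Real.log ((⨆ i, (b i - a i)) / (⨅ i, (b i - a i))))) * bmoN f := by
  have : Nonempty (Fin n) := ⟨⟨0, hn⟩⟩
  refine ⟨4 * 8 ^ n, by positivity, fun f hf a b hab => ?_⟩
  obtain ⟨i₀, hi₀⟩ := exists_eq_ciInf_of_finite (f := fun i => b i - a i)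
  have hs : 0 < ⨅ i, (b i - a i) := hi₀ ▸ sub_pos.2 (hab i₀)
  have hsab : ∀ i, ⨅ i, (b i - a i) ≤ b i - a i := ciInf_le (Finite.bddBelow_range _)
  have habL : ∀ i, b i - a i ≤ ⨆ i, (b i - a i) := le_ciSup (Finite.bddAbove_range _)
  have hsL := (hsab i₀).trans (habL i₀)
  have hlog : 0 ≤ Real.log ((⨆ i, (b i - a i)) / ⨅ i, (b i - a i)) :=
    Real.log_nonneg ((one_le_div hs).2 hsL)
  rcases eq_or_ne (bmoN f) ⊤ with hB | hB
  · rw [hB, ENNReal.mul_top (ENNReal.ofReal_pos.2 (by positivity)).ne']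
    exact le_top
  rw [← ENNReal.ofReal_toReal hB, ← ENNReal.ofReal_mul (by positivity)]
  exact ENNReal.ofReal_le_ofReal
    (oscN_Icc_le hf (oscN_closedBall_le_toReal_bmoN hB) hs hsL hsab habL)
end

section
/- There exists a dimensional constant C(n) such that: for every nonnegative locally integrable f on ℝⁿ with ‖f‖_{BMO(ℝⁿ)} ≤ 1, every closed axis-parallel cube Q₀ with side length l(Q₀) > 0, every constant c > e, every x, y ∈ Q₀, and every closed axis-parallel cube Q containing x with side length l(Q) ≥ c·l(Q₀), one has f_Q − M₂f(y) ≤ C(n) c^{−1} log c, where f_Q = (1/|Q|)∫_Q f and M₂f(y) = sup{ f_{Q'} : Q' a closed axis-parallel cube containing y with l(Q') ≥ c·l(Q₀) } (a supremum in [0,∞]). Consequently, if M₂f is finite on Q₀, then |M₂f(x) − M₂f(y)| ≤ C(n) c^{−1} log c for all x, y ∈ Q₀. -/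
open MeasureTheory Set Filter
open scoped ENNReal Topology

/-- The "nonlocal" maximal function: supremum (in `[0,∞]`) of the averages of `f`
over cubes containing `y` with side length at least `c · l₀`. -/
noncomputable def nonlocalMax {n : ℕ} (f : (Fin n → ℝ) → ℝ) (c l₀ : ℝ)
    (y : Fin n → ℝ) : ℝ≥0∞ :=
  ⨆ (a : Fin n → ℝ) (l : ℝ) (_ : c * l₀ ≤ l) (_ : y ∈ cube a l),
    ENNReal.ofReal (⨍ t in cube a l, f t)

/-!
Enlarge the cube `Q ∋ x` by `l₀` to the cube `Q''` of side `l(Q) + l₀` that also contains `Q₀`,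
hence `y`; then `f_{Q''} ≤ M₂f(y)`. The identity `|Q''| (f_{Q''} - f_Q) = ∫_{Q'' \ Q} (f - f_Q)`
reduces `f_Q - f_{Q''}` to an integral over a boundary layer of width `l₀`. That layer is covered
by `2n m^{n-1}` cubes `K` of side `l₀`, `m ≈ l(Q)/l₀`, and on each of them
`∫_K |f - f_Q| ≤ |K| (1 + |f_K - f_{Q''}| + |f_{Q''} - f_Q|)`, where a doubling chain from `K` up
to `Q''` bounds `|f_K - f_{Q''}|` by a multiple of `log (l(Q)/l₀)`. Dividing by `|Q''|` leaves
`≲ (l₀/l(Q)) log (l(Q)/l₀) ≤ log c / c`, as `log t / t` decreases for `t ≥ e`.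
-/

section SetAverage

variable {α : Type*} [MeasurableSpace α] {μ : Measure α} {f g : α → ℝ} {A B S : Set α}

theorem measureReal_mul_setAverage_sub_setAverage (hA : MeasurableSet A) (hAB : A ⊆ B)
    (hB : μ B ≠ ∞) (hf : IntegrableOn f B μ) :
    μ.real B * ((⨍ x in B, f x ∂μ) - ⨍ x in A, f x ∂μ) =
      ∫ x in B \ A, (f x - ⨍ y in A, f y ∂μ) ∂μ := by
  have hc : IntegrableOn (fun _ ↦ ⨍ y in A, f y ∂μ) B μ := integrableOn_const hB
  rw [setIntegral_sdiff (f := fun x ↦ f x - ⨍ y in A, f y ∂μ) hA (hf.sub hc) hAB,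
    setAverage_sub_setAverage (measure_ne_top_of_subset hAB hB),
    integral_sub hf hc, setIntegral_const, ← measure_smul_setAverage f hB]
  simp only [smul_eq_mul]; ring

theorem measureReal_mul_abs_setAverage_sub_le (hAB : A ⊆ B) (hB : μ B ≠ ∞)
    (hf : IntegrableOn f B μ) (c : ℝ) :
    μ.real A * |(⨍ x in A, f x ∂μ) - c| ≤ ∫ x in B, |f x - c| ∂μ := by
  have hA : μ A ≠ ∞ := measure_ne_top_of_subset hAB hB
  calc μ.real A * |(⨍ x in A, f x ∂μ) - c| = |∫ x in A, (f x - c) ∂μ| := by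
        rw [integral_sub (hf.mono_set hAB) (integrableOn_const hA), setIntegral_const,
          ← measure_smul_setAverage f hA, smul_eq_mul, smul_eq_mul, ← mul_sub, abs_mul,
          abs_of_nonneg measureReal_nonneg]
    _ ≤ ∫ x in A, |f x - c| ∂μ := abs_integral_le_integral_abs
    _ ≤ ∫ x in B, |f x - c| ∂μ :=
        setIntegral_mono_set (hf.sub (integrableOn_const hB)).abs (ae_of_all _ fun _ ↦ abs_nonneg _)
          hAB.eventuallyLE

theorem setIntegral_abs_sub_le (hA : μ A ≠ ∞) (hf : IntegrableOn f A μ) (c : ℝ) :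
    ∫ x in A, |f x - c| ∂μ ≤
      μ.real A * ((⨍ x in A, |f x - ⨍ y in A, f y ∂μ| ∂μ) + |(⨍ x in A, f x ∂μ) - c|) := by
  have hfA : IntegrableOn (fun x ↦ f x - ⨍ y in A, f y ∂μ) A μ := hf.sub (integrableOn_const hA)
  calc ∫ x in A, |f x - c| ∂μ
      ≤ ∫ x in A, (|f x - ⨍ y in A, f y ∂μ| + |(⨍ y in A, f y ∂μ) - c|) ∂μ :=
        integral_mono (hf.sub (integrableOn_const hA)).abs (hfA.abs.add (integrableOn_const hA))
          fun x ↦ abs_sub_le _ _ _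
    _ = _ := by
        rw [integral_add hfA.abs (integrableOn_const hA), setIntegral_const,
          ← measure_smul_setAverage _ hA, smul_eq_mul, smul_eq_mul, mul_add]

theorem setIntegral_le_sum_of_subset_iUnion {ι : Type*} [Fintype ι] {K : ι → Set α}
    (hg : ∀ x, 0 ≤ g x) (hSK : S ⊆ ⋃ i, K i) (hgK : ∀ i, IntegrableOn g (K i) μ) :
    ∫ x in S, g x ∂μ ≤ ∑ i, ∫ x in K i, g x ∂μ := by
  calc ∫ x in S, g x ∂μ ≤ ∫ x in ⋃ i, K i, g x ∂μ :=
        setIntegral_mono_set (integrableOn_finite_iUnion.2 hgK) (ae_of_all _ hg) hSK.eventuallyLE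
    _ ≤ ∫ x, g x ∂(∑ i, μ.restrict (K i)) := by
        refine integral_mono_measure ?_ (ae_of_all _ hg) ?_
        · rw [← Measure.sum_fintype]; exact Measure.restrict_iUnion_le
        · exact integrable_finsetSum_measure.2 fun i _ ↦ hgK i
    _ = ∑ i, ∫ x in K i, g x ∂μ := integral_finsetSum_measure fun i _ ↦ hgK i

end SetAverage

section Cube

variable {n : ℕ} {f : (Fin n → ℝ) → ℝ} {a A : Fin n → ℝ} {l s L : ℝ}

theorem measurableSet_cube : MeasurableSet (cube a l) := measurableSet_Icc

theorem volume_cube : volume (cube a l) = ENNReal.ofReal l ^ n := by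
  simp [cube, Real.volume_Icc_pi]

theorem volume_cube_ne_top : volume (cube a l) ≠ ∞ := by
  rw [volume_cube]; exact ENNReal.pow_ne_top ENNReal.ofReal_ne_top

theorem measureReal_cube (hl : 0 ≤ l) : volume.real (cube a l) = l ^ n := by
  rw [measureReal_def, volume_cube, ENNReal.toReal_pow, ENNReal.toReal_ofReal hl]

theorem integrableOn_cube (hf : LocallyIntegrable f volume) : IntegrableOn f (cube a l) volume :=
  hf.integrableOn_isCompact isCompact_Icc

theorem cube_subset_cube_iff (hs : 0 ≤ s) :
    cube a s ⊆ cube A L ↔ ∀ i, A i ≤ a i ∧ a i + s ≤ A i + L := by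
  rw [cube, cube, Icc_subset_Icc_iff fun i ↦ le_add_of_nonneg_right hs]
  exact ⟨fun h i ↦ ⟨h.1 i, h.2 i⟩, fun h ↦ ⟨fun i ↦ (h i).1, fun i ↦ (h i).2⟩⟩

theorem exists_cube_between {σ : ℝ} (hs : 0 ≤ s) (hsσ : s ≤ σ) (hσL : σ ≤ L)
    (h : cube a s ⊆ cube A L) : ∃ p, cube a s ⊆ cube p σ ∧ cube p σ ⊆ cube A L := by
  rw [cube_subset_cube_iff hs] at h
  refine ⟨fun i ↦ min (a i) (A i + L - σ), (cube_subset_cube_iff hs).2 fun i ↦ ?_,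
    (cube_subset_cube_iff (hs.trans hsσ)).2 fun i ↦ ?_⟩
  · constructor
    · exact min_le_left _ _
    · rcases min_cases (a i) (A i + L - σ) with ⟨h', -⟩ | ⟨h', -⟩ <;> rw [h'] <;>
        linarith [h i]
  · constructor
    · exact le_min (h i).1 (by linarith)
    · linarith [min_le_right (a i) (A i + L - σ)]

theorem setIntegral_abs_sub_setAverage_cube (hl : 0 ≤ l) :
    ∫ x in cube a l, |f x - ⨍ y in cube a l, f y| = l ^ n * oscN f (cube a l) := by
  rw [oscN, ← measure_smul_setAverage _ volume_cube_ne_top, measureReal_cube hl, smul_eq_mul]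

theorem oscN_cube_le_one (hbmo : bmoN f ≤ 1) (hl : 0 < l) : oscN f (cube a l) ≤ 1 :=
  ENNReal.ofReal_le_one.1 <| (le_iSup₂_of_le a l (le_iSup (fun _ ↦ _) hl)).trans hbmo

end Cube

section Chain

variable {n : ℕ} {f : (Fin n → ℝ) → ℝ} {a A : Fin n → ℝ} {s L : ℝ}

theorem abs_setAverage_cube_sub_le_of_le_two_mul (hf : LocallyIntegrable f volume)
    (hbmo : bmoN f ≤ 1) (h : cube a s ⊆ cube A L) (hs : 0 < s) (hsL : s ≤ L) (hL : L ≤ 2 * s) :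
    |(⨍ x in cube a s, f x) - ⨍ x in cube A L, f x| ≤ 2 ^ n := by
  have hL0 : 0 < L := hs.trans_le hsL
  have key := measureReal_mul_abs_setAverage_sub_le h volume_cube_ne_top (integrableOn_cube hf)
    (⨍ x in cube A L, f x)
  rw [measureReal_cube hs.le, setIntegral_abs_sub_setAverage_cube hL0.le] at key
  refine le_of_mul_le_mul_left ?_ (pow_pos hs n)
  calc s ^ n * |(⨍ x in cube a s, f x) - ⨍ x in cube A L, f x| ≤ L ^ n * 1 :=
        key.trans (mul_le_mul_of_nonneg_left (oscN_cube_le_one hbmo hL0) (by positivity))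
    _ ≤ (2 * s) ^ n := by rw [mul_one]; gcongr
    _ = s ^ n * 2 ^ n := by ring

theorem abs_setAverage_cube_sub_le_of_le_two_pow (hf : LocallyIntegrable f volume)
    (hbmo : bmoN f ≤ 1) (k : ℕ) (h : cube a s ⊆ cube A L) (hs : 0 < s) (hsL : s ≤ L)
    (hL : L ≤ 2 ^ k * s) :
    |(⨍ x in cube a s, f x) - ⨍ x in cube A L, f x| ≤ 2 ^ n * (k + 1) := by
  induction k generalizing A L with
  | zero =>
    simpa using abs_setAverage_cube_sub_le_of_le_two_mul hf hbmo h hs hsL (by linarith)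
  | succ k ih =>
    set σ := max s (L / 2)
    have hσL : σ ≤ L := max_le hsL (by linarith)
    obtain ⟨p, hap, hpA⟩ := exists_cube_between hs.le (le_max_left s (L / 2)) hσL h
    have hσ : σ ≤ 2 ^ k * s := max_le (le_mul_of_one_le_left hs.le (one_le_pow₀ one_le_two))
      (by rw [pow_succ] at hL; linarith)
    calc |(⨍ x in cube a s, f x) - ⨍ x in cube A L, f x|
        ≤ |(⨍ x in cube a s, f x) - ⨍ x in cube p σ, f x| +
          |(⨍ x in cube p σ, f x) - ⨍ x in cube A L, f x| := abs_sub_le _ _ _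
      _ ≤ 2 ^ n * (k + 1) + 2 ^ n := add_le_add (ih hap (le_max_left _ _) hσ)
          (abs_setAverage_cube_sub_le_of_le_two_mul hf hbmo hpA (hs.trans_le (le_max_left _ _))
            hσL (by linarith [le_max_right s (L / 2)]))
      _ = 2 ^ n * ((k + 1 : ℕ) + 1) := by push_cast; ring

end Chain

section Grid

variable {n m : ℕ} {A : Fin n → ℝ} {s L : ℝ}

def gridCorner (A : Fin n → ℝ) (L s : ℝ) (j : Fin n → ℕ) : Fin n → ℝ :=
  fun i ↦ A i + min (j i * s) (L - s)

theorem cube_gridCorner_subset (hs : 0 ≤ s) (hsL : s ≤ L) (j : Fin n → ℕ) :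
    cube (gridCorner A L s j) s ⊆ cube A L :=
  (cube_subset_cube_iff hs).2 fun i ↦
    ⟨le_add_of_nonneg_right (le_min (by positivity) (by linarith)),
      by simp only [gridCorner]; linarith [min_le_right ((j i : ℝ) * s) (L - s)]⟩

theorem mem_cube_gridCorner {z : Fin n → ℝ} {j : Fin n → ℕ}
    (h : ∀ i, z i - A i ∈ Icc (min (j i * s) (L - s)) (min (j i * s) (L - s) + s)) :
    z ∈ cube (gridCorner A L s j) s :=
  ⟨fun i ↦ by simp only [gridCorner]; linarith [(h i).1],
    fun i ↦ by simp only [gridCorner]; linarith [(h i).2]⟩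

theorem exists_lt_mem_Icc_min {u : ℝ} (hs : 0 < s) (hsL : s ≤ L) (hm : L ≤ m * s)
    (hu : u ∈ Icc 0 L) : ∃ j < m, u ∈ Icc (min (j * s) (L - s)) (min (j * s) (L - s) + s) := by
  have hmin : ∀ j : ℕ, min (j * s) (L - s) + s = min ((j + 1) * s) L := fun j ↦ by
    rw [← min_add_add_right, sub_add_cancel, add_mul, one_mul]
  have hfloor : (⌊u / s⌋₊ : ℝ) * s ≤ u := (le_div_iff₀ hs).1 (Nat.floor_le (div_nonneg hu.1 hs.le))
  rcases lt_or_ge ⌊u / s⌋₊ m with h | h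
  · refine ⟨_, h, (min_le_left _ _).trans hfloor, ?_⟩
    rw [hmin]
    exact le_min ((div_le_iff₀ hs).1 (Nat.lt_floor_add_one _).le) hu.2
  · have hm1 : 1 ≤ m := by
      by_contra! h0
      simp only [Nat.lt_one_iff.1 h0, CharP.cast_eq_zero, zero_mul] at hm
      linarith
    refine ⟨m - 1, Nat.sub_lt hm1 one_pos, (min_le_left _ _).trans ?_, ?_⟩
    · calc ((m - 1 : ℕ) : ℝ) * s ≤ (⌊u / s⌋₊ : ℝ) * s := by gcongr; omega
        _ ≤ u := hfloor
    · rw [hmin, Nat.cast_sub hm1, Nat.cast_one, sub_add_cancel, min_eq_right hm]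
      exact hu.2

/-- `⟨i₀, b, j⟩` indexes the grid cube lying against the lower (`b = true`) or upper face of the
big cube in direction `i₀`, at grid position `j` in the other directions. -/
abbrev BoundaryIndex (n m : ℕ) := (i₀ : Fin n) × Bool × ({i : Fin n // i ≠ i₀} → Fin m)

def BoundaryIndex.coord (w : BoundaryIndex n m) (i : Fin n) : ℕ :=
  if h : i = w.1 then (if w.2.1 then 0 else m - 1) else w.2.2 ⟨i, h⟩

theorem card_boundaryIndex : Fintype.card (BoundaryIndex n m) = n * (2 * m ^ (n - 1)) := by
  simp [Fintype.card_sigma, Fintype.card_subtype_compl]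

theorem cube_sdiff_subset_iUnion_boundary {a : Fin n → ℝ} {l : ℝ} (hs : 0 < s) (hl : 0 ≤ l)
    (hAa : ∀ i, A i ≤ a i) (haA : ∀ i, a i ≤ A i + s) (hm : l + s ≤ m * s) :
    cube A (l + s) \ cube a l ⊆
      ⋃ w : BoundaryIndex n m, cube (gridCorner A (l + s) s w.coord) s := by
  rintro z ⟨hz, hza⟩
  have hsL : s ≤ l + s := by linarith
  choose j hjm hj using fun i ↦ exists_lt_mem_Icc_min (u := z i - A i) hs hsL hm
    ⟨by linarith [hz.1 i], by linarith [hz.2 i]⟩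
  obtain ⟨i₀, hi₀⟩ : ∃ i₀, z i₀ < a i₀ ∨ a i₀ + l < z i₀ := by
    by_contra! h
    exact hza ⟨fun i ↦ (h i).1, fun i ↦ (h i).2⟩
  refine mem_iUnion.2
    ⟨⟨i₀, decide (z i₀ < a i₀), fun i ↦ ⟨j i, hjm i⟩⟩, mem_cube_gridCorner fun i ↦ ?_⟩
  by_cases hi : i = i₀
  · subst hi
    by_cases hlow : z i < a i
    · simp only [BoundaryIndex.coord, dite_true, hlow, decide_true, if_true, Nat.cast_zero,
        zero_mul, add_sub_cancel_right, min_eq_left hl]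
      exact ⟨by linarith [hz.1 i], by linarith [haA i]⟩
    · have hm1 : 1 ≤ m := Nat.one_le_of_lt (hjm i)
      have hml : l ≤ ((m - 1 : ℕ) : ℝ) * s := by rw [Nat.cast_sub hm1]; push_cast; linarith
      simp only [BoundaryIndex.coord, dite_true, hlow, decide_false, Bool.false_eq_true, if_false,
        add_sub_cancel_right, min_eq_right hml]
      exact ⟨by linarith [hAa i, hi₀.resolve_left hlow], by linarith [hz.2 i]⟩
  · simpa [BoundaryIndex.coord, hi] using hj i

end Grid

section Estimate

variable {n : ℕ} {f : (Fin n → ℝ) → ℝ} {a A : Fin n → ℝ} {l s : ℝ}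

theorem pow_mul_abs_setAverage_cube_sub_le_card_boundary (hf : LocallyIntegrable f volume)
    (hbmo : bmoN f ≤ 1) {m k : ℕ} (hs : 0 < s) (hsl : s ≤ l) (hAa : ∀ i, A i ≤ a i)
    (haA : ∀ i, a i ≤ A i + s) (hm : l + s ≤ m * s) (hk : l + s ≤ 2 ^ k * s) :
    (l + s) ^ n * |(⨍ x in cube a l, f x) - ⨍ x in cube A (l + s), f x| ≤
      Fintype.card (BoundaryIndex n m) * s ^ n * (1 + 2 ^ n * (k + 1) + 2 ^ n) := by
  set fQ := ⨍ x in cube a l, f x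
  set fQ' := ⨍ x in cube A (l + s), f x
  have hl : 0 ≤ l := hs.le.trans hsl
  have hsL : s ≤ l + s := by linarith
  have hQQ' : cube a l ⊆ cube A (l + s) :=
    (cube_subset_cube_iff hl).2 fun i ↦ ⟨hAa i, by linarith [haA i]⟩
  have hQ' : |fQ' - fQ| ≤ 2 ^ n := by
    rw [abs_sub_comm]
    exact abs_setAverage_cube_sub_le_of_le_two_mul hf hbmo hQQ' (hs.trans_le hsl) (by linarith)
      (by linarith)
  have hK : ∀ w : BoundaryIndex n m, ∫ x in cube (gridCorner A (l + s) s w.coord) s, |f x - fQ| ≤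
      s ^ n * (1 + 2 ^ n * (k + 1) + 2 ^ n) := fun w ↦ by
    set K := cube (gridCorner A (l + s) s w.coord) s
    have hKQ' : |(⨍ x in K, f x) - fQ'| ≤ 2 ^ n * (k + 1) :=
      abs_setAverage_cube_sub_le_of_le_two_pow hf hbmo k (cube_gridCorner_subset hs.le hsL _) hs
        hsL hk
    calc ∫ x in K, |f x - fQ| ≤ s ^ n * (oscN f K + |(⨍ x in K, f x) - fQ|) := by
          have h := setIntegral_abs_sub_le (A := K) volume_cube_ne_top (integrableOn_cube hf) fQ
          rwa [measureReal_cube hs.le] at h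
      _ ≤ s ^ n * (1 + (2 ^ n * (k + 1) + 2 ^ n)) := by
          gcongr
          · exact oscN_cube_le_one hbmo hs
          · exact (abs_sub_le _ fQ' _).trans (add_le_add hKQ' hQ')
      _ = s ^ n * (1 + 2 ^ n * (k + 1) + 2 ^ n) := by ring
  calc (l + s) ^ n * |fQ - fQ'| = |(l + s) ^ n * (fQ' - fQ)| := by
        rw [abs_mul, abs_of_nonneg (pow_nonneg (add_nonneg hl hs.le) n), abs_sub_comm]
    _ = |∫ x in cube A (l + s) \ cube a l, (f x - fQ)| := by
        rw [← measureReal_cube (a := A) (by linarith),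
          measureReal_mul_setAverage_sub_setAverage measurableSet_cube hQQ' volume_cube_ne_top
            (integrableOn_cube hf)]
    _ ≤ ∫ x in cube A (l + s) \ cube a l, |f x - fQ| := abs_integral_le_integral_abs
    _ ≤ ∑ w : BoundaryIndex n m, ∫ x in cube (gridCorner A (l + s) s w.coord) s, |f x - fQ| :=
        setIntegral_le_sum_of_subset_iUnion (fun _ ↦ abs_nonneg _)
          (cube_sdiff_subset_iUnion_boundary hs hl hAa haA hm)
          fun _ ↦ ((integrableOn_cube hf).sub (integrableOn_const volume_cube_ne_top)).abs
    _ ≤ ∑ _w : BoundaryIndex n m, s ^ n * (1 + 2 ^ n * (k + 1) + 2 ^ n) :=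
        Finset.sum_le_sum fun w _ ↦ hK w
    _ = Fintype.card (BoundaryIndex n m) * s ^ n * (1 + 2 ^ n * (k + 1) + 2 ^ n) := by
        rw [Finset.sum_const, Finset.card_univ, nsmul_eq_mul, mul_assoc]

end Estimate

theorem exists_le_two_pow_and_le_two_mul_log_add_one {x : ℝ} (hx : 1 ≤ x) :
    ∃ k : ℕ, x ≤ 2 ^ k ∧ (k : ℝ) ≤ 2 * Real.log x + 1 := by
  have hlogb : 0 ≤ Real.logb 2 x := Real.logb_nonneg one_lt_two hx
  refine ⟨⌈Real.logb 2 x⌉₊, ?_, ?_⟩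
  · calc x = 2 ^ Real.logb 2 x := (Real.rpow_logb two_pos (by norm_num) (by linarith)).symm
      _ ≤ 2 ^ (⌈Real.logb 2 x⌉₊ : ℝ) := Real.rpow_le_rpow_of_exponent_le one_le_two (Nat.le_ceil _)
      _ = 2 ^ ⌈Real.logb 2 x⌉₊ := Real.rpow_natCast _ _
  · have hlog2 : 1 / 2 ≤ Real.log 2 := by linarith [Real.log_two_gt_d9]
    have hlogx : 0 ≤ Real.log x := Real.log_nonneg hx
    calc (⌈Real.logb 2 x⌉₊ : ℝ) ≤ Real.logb 2 x + 1 := (Nat.ceil_lt_add_one hlogb).le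
      _ = Real.log x / Real.log 2 + 1 := rfl
      _ ≤ Real.log x / (1 / 2) + 1 := by gcongr
      _ = 2 * Real.log x + 1 := by ring

theorem card_boundaryIndex_mul_le (n m : ℕ) {t : ℝ} (ht : 0 ≤ t) (hm : (m : ℝ) ≤ t + 2) :
    Fintype.card (BoundaryIndex n m) * t ≤ 4 ^ n * (t + 1) ^ n := by
  rw [card_boundaryIndex]
  rcases n with _ | n
  · simp
  · have hn : (n + 1 : ℝ) ≤ 2 ^ (n + 1) := by exact_mod_cast (Nat.lt_two_pow_self).le
    calc ((n + 1) * (2 * m ^ (n + 1 - 1)) : ℕ) * t = (n + 1 : ℝ) * (2 * m ^ n) * t := by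
          push_cast; simp
      _ ≤ 2 ^ (n + 1) * (2 * (2 * (t + 1)) ^ n) * (t + 1) := by
          gcongr <;> linarith
      _ = 4 ^ (n + 1) * (t + 1) ^ (n + 1) := by
          rw [show (4 : ℝ) = 2 * 2 by norm_num, mul_pow, mul_pow]; ring

theorem one_add_two_pow_mul_add_two_pow_le_mul_log {n k : ℕ} {t : ℝ} (ht : Real.exp 1 ≤ t)
    (hk : (k : ℝ) ≤ 2 * Real.log (t + 1) + 1) :
    1 + 2 ^ n * (k + 1) + 2 ^ n ≤ 8 * 2 ^ n * Real.log t := by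
  have ht0 : 0 < t := (Real.exp_pos 1).trans_le ht
  have hlogt : 1 ≤ Real.log t := (Real.le_log_iff_exp_le ht0).2 ht
  have ht1 : 1 ≤ t := by linarith [Real.add_one_le_exp 1]
  have hlog : Real.log (t + 1) ≤ Real.log t + 1 :=
    calc Real.log (t + 1) ≤ Real.log (2 * t) := Real.log_le_log (by linarith) (by linarith)
      _ = Real.log 2 + Real.log t := Real.log_mul two_ne_zero ht0.ne'
      _ ≤ Real.log t + 1 := by linarith [Real.log_two_lt_d9]
  have h2n : (1 : ℝ) ≤ 2 ^ n := one_le_pow₀ one_le_two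
  calc 1 + 2 ^ n * (k + 1) + 2 ^ n ≤ (2 : ℝ) ^ n * (k + 3) := by linarith
    _ ≤ 2 ^ n * (8 * Real.log t) := by gcongr; linarith
    _ = 8 * 2 ^ n * Real.log t := by ring

theorem abs_setAverage_cube_sub_setAverage_enlarged_le {n : ℕ} {f : (Fin n → ℝ) → ℝ}
    (hf : LocallyIntegrable f volume) (hbmo : bmoN f ≤ 1) {a A : Fin n → ℝ} {l s : ℝ}
    (hs : 0 < s) (hls : Real.exp 1 * s ≤ l) (hAa : ∀ i, A i ≤ a i) (haA : ∀ i, a i ≤ A i + s) :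
    |(⨍ x in cube a l, f x) - ⨍ x in cube A (l + s), f x| ≤
      8 ^ (n + 1) * (Real.log (l / s) / (l / s)) := by
  set D := |(⨍ x in cube a l, f x) - ⨍ x in cube A (l + s), f x|
  set t := l / s
  have ht : Real.exp 1 ≤ t := (le_div_iff₀ hs).2 hls
  have ht1 : 1 ≤ t := by linarith [Real.add_one_le_exp 1]
  have hsl : s ≤ l := (le_mul_of_one_le_left hs.le (by linarith [Real.add_one_le_exp 1])).trans hls
  have hls' : l + s = (t + 1) * s := by rw [add_mul, div_mul_cancel₀ l hs.ne', one_mul]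
  obtain ⟨k, hk, hklog⟩ := exists_le_two_pow_and_le_two_mul_log_add_one (x := t + 1) (by linarith)
  set m := ⌈t + 1⌉₊
  have hm : (m : ℝ) ≤ t + 2 := by linarith [Nat.ceil_lt_add_one (a := t + 1) (by linarith)]
  have hcover := pow_mul_abs_setAverage_cube_sub_le_card_boundary hf hbmo (m := m) (k := k) hs
    hsl hAa haA (by rw [hls']; gcongr; exact Nat.le_ceil _) (by rw [hls']; gcongr)
  rw [show (l + s) ^ n = (t + 1) ^ n * s ^ n by rw [hls', mul_pow], mul_right_comm,
    mul_right_comm _ (s ^ n)] at hcover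
  have hD : (t + 1) ^ n * D ≤ Fintype.card (BoundaryIndex n m) * (1 + 2 ^ n * (k + 1) + 2 ^ n) :=
    le_of_mul_le_mul_right hcover (pow_pos hs n)
  rw [mul_div_assoc', le_div_iff₀ (by linarith)]
  refine le_of_mul_le_mul_left ?_ (pow_pos (by linarith : 0 < t + 1) n)
  calc (t + 1) ^ n * (D * t) = (t + 1) ^ n * D * t := by ring
    _ ≤ Fintype.card (BoundaryIndex n m) * (1 + 2 ^ n * (k + 1) + 2 ^ n) * t :=
        mul_le_mul_of_nonneg_right hD (by linarith)
    _ = Fintype.card (BoundaryIndex n m) * t * (1 + 2 ^ n * (k + 1) + 2 ^ n) := by ring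
    _ ≤ 4 ^ n * (t + 1) ^ n * (8 * 2 ^ n * Real.log t) :=
        mul_le_mul (card_boundaryIndex_mul_le n m (by linarith) hm)
          (one_add_two_pow_mul_add_two_pow_le_mul_log ht hklog) (by positivity) (by positivity)
    _ = (t + 1) ^ n * (8 ^ (n + 1) * Real.log t) := by
        rw [show (8 : ℝ) = 4 * 2 by norm_num, mul_pow]; ring

theorem ENNReal.abs_toReal_sub_toReal_le {a b : ℝ≥0∞} {ε : ℝ} (ha : a ≠ ∞) (hb : b ≠ ∞)
    (hε : 0 ≤ ε) (hab : a ≤ b + ENNReal.ofReal ε) (hba : b ≤ a + ENNReal.ofReal ε) :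
    |a.toReal - b.toReal| ≤ ε := by
  have h1 := ENNReal.toReal_le_add hab hb ENNReal.ofReal_ne_top
  have h2 := ENNReal.toReal_le_add hba ha ENNReal.ofReal_ne_top
  rw [ENNReal.toReal_ofReal hε] at h1 h2
  exact abs_sub_le_iff.2 ⟨by linarith, by linarith⟩

section NonlocalMax

variable {n : ℕ} {f : (Fin n → ℝ) → ℝ} {a a₀ x y : Fin n → ℝ} {c l l₀ : ℝ}

theorem ofReal_setAverage_le_nonlocalMax (hl : c * l₀ ≤ l) (hy : y ∈ cube a l) :
    ENNReal.ofReal (⨍ t in cube a l, f t) ≤ nonlocalMax f c l₀ y :=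
  le_iSup₂_of_le a l <| le_iSup₂_of_le (f := fun _ _ ↦ ENNReal.ofReal _) hl hy le_rfl

theorem cube_subset_cube_min_add (hx₀ : x ∈ cube a₀ l₀) (hx : x ∈ cube a l) :
    cube a₀ l₀ ⊆ cube (fun i ↦ min (a i) (a₀ i)) (l + l₀) :=
  Icc_subset_Icc (fun i ↦ min_le_right _ _) fun i ↦ by
    have := le_min (show a₀ i - l ≤ a i by linarith [hx₀.1 i, hx.2 i])
      (show a₀ i - l ≤ a₀ i by linarith [hx.1 i, hx.2 i])
    dsimp only
    linarith

theorem le_min_add (hx₀ : x ∈ cube a₀ l₀) (hx : x ∈ cube a l) (i : Fin n) :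
    a i ≤ min (a i) (a₀ i) + l₀ := by
  have := le_min (show a i - l₀ ≤ a i by linarith [hx₀.1 i, hx₀.2 i])
    (show a i - l₀ ≤ a₀ i by linarith [hx₀.2 i, hx.1 i])
  linarith

theorem ofReal_setAverage_le_nonlocalMax_add (hf : LocallyIntegrable f volume)
    (hbmo : bmoN f ≤ 1) (hl₀ : 0 < l₀) (hc : Real.exp 1 ≤ c) (hx₀ : x ∈ cube a₀ l₀)
    (hy₀ : y ∈ cube a₀ l₀) (hcl : c * l₀ ≤ l) (hx : x ∈ cube a l) :
    ENNReal.ofReal (⨍ t in cube a l, f t) ≤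
      nonlocalMax f c l₀ y + ENNReal.ofReal (8 ^ (n + 1) * (Real.log c / c)) := by
  set A : Fin n → ℝ := fun i ↦ min (a i) (a₀ i)
  have hc₀ : Real.exp 1 * l₀ ≤ l := (mul_le_mul_of_nonneg_right hc hl₀.le).trans hcl
  have hlt : c ≤ l / l₀ := (le_div_iff₀ hl₀).2 hcl
  have hmax : ENNReal.ofReal (⨍ t in cube A (l + l₀), f t) ≤ nonlocalMax f c l₀ y :=
    ofReal_setAverage_le_nonlocalMax (by linarith) (cube_subset_cube_min_add hx₀ hx hy₀)
  have hclose := abs_setAverage_cube_sub_setAverage_enlarged_le hf hbmo hl₀ hc₀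
    (fun i ↦ min_le_left _ _) (le_min_add hx₀ hx)
  have hmono : Real.log (l / l₀) / (l / l₀) ≤ Real.log c / c :=
    Real.log_div_self_antitoneOn hc (hc.trans hlt) hlt
  calc ENNReal.ofReal (⨍ t in cube a l, f t)
      ≤ ENNReal.ofReal ((⨍ t in cube A (l + l₀), f t) + 8 ^ (n + 1) * (Real.log c / c)) :=
        ENNReal.ofReal_le_ofReal <| by
          linarith [(le_abs_self _).trans hclose,
            mul_le_mul_of_nonneg_left hmono (by positivity : (0 : ℝ) ≤ 8 ^ (n + 1))]
    _ ≤ _ := ENNReal.ofReal_add_le.trans (add_le_add hmax le_rfl)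

theorem nonlocalMax_le_nonlocalMax_add (hf : LocallyIntegrable f volume) (hbmo : bmoN f ≤ 1)
    (hl₀ : 0 < l₀) (hc : Real.exp 1 ≤ c) (hx₀ : x ∈ cube a₀ l₀) (hy₀ : y ∈ cube a₀ l₀) :
    nonlocalMax f c l₀ x ≤
      nonlocalMax f c l₀ y + ENNReal.ofReal (8 ^ (n + 1) * (Real.log c / c)) :=
  iSup₂_le fun _ _ ↦ iSup₂_le fun hcl hx ↦
    ofReal_setAverage_le_nonlocalMax_add hf hbmo hl₀ hc hx₀ hy₀ hcl hx

end NonlocalMax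

theorem nonlocal_maximal_oscillation_general (n : ℕ) :
    ∃ C : ℝ, 0 < C ∧
      ∀ (f : (Fin n → ℝ) → ℝ), LocallyIntegrable f volume → (∀ x, 0 ≤ f x) →
        bmoN f ≤ 1 →
      ∀ (a₀ : Fin n → ℝ) (l₀ : ℝ), 0 < l₀ →
      ∀ c : ℝ, Real.exp 1 < c →
        ((∀ x ∈ cube a₀ l₀, ∀ y ∈ cube a₀ l₀,
          ∀ (a : Fin n → ℝ) (l : ℝ), c * l₀ ≤ l → x ∈ cube a l →
            ENNReal.ofReal (⨍ t in cube a l, f t) ≤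
              nonlocalMax f c l₀ y + ENNReal.ofReal (C * c⁻¹ * Real.log c)) ∧
        ((∀ z ∈ cube a₀ l₀, nonlocalMax f c l₀ z ≠ ⊤) →
          ∀ x ∈ cube a₀ l₀, ∀ y ∈ cube a₀ l₀,
            |(nonlocalMax f c l₀ x).toReal - (nonlocalMax f c l₀ y).toReal| ≤
              C * c⁻¹ * Real.log c)) := by
  refine ⟨8 ^ (n + 1), by positivity, fun f hf _ hbmo a₀ l₀ hl₀ c hc ↦ ?_⟩
  have hC : (8 : ℝ) ^ (n + 1) * c⁻¹ * Real.log c = 8 ^ (n + 1) * (Real.log c / c) := by ring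
  have hc1 : 1 ≤ c := by linarith [Real.add_one_le_exp 1]
  rw [hC]
  refine ⟨fun x hx y hy a l hcl hxa ↦
    ofReal_setAverage_le_nonlocalMax_add hf hbmo hl₀ hc.le hx hy hcl hxa, fun hfin x hx y hy ↦ ?_⟩
  exact ENNReal.abs_toReal_sub_toReal_le (hfin x hx) (hfin y hy)
    (by have := Real.log_nonneg hc1; positivity)
    (nonlocalMax_le_nonlocalMax_add hf hbmo hl₀ hc.le hx hy)
    (nonlocalMax_le_nonlocalMax_add hf hbmo hl₀ hc.le hy hx)

/-- there is a dimensional constant `C(n)` such that, for every nonnegative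
locally integrable `f` with `‖f‖_{BMO(ℝⁿ)} ≤ 1`, every cube `Q₀` of side `l₀ > 0`,
every `c > e`, all `x, y ∈ Q₀`, and every cube `Q ∋ x` with side `l(Q) ≥ c·l₀`, one has
`f_Q − M₂f(y) ≤ C(n) c⁻¹ log c`; consequently, if `M₂f` is finite on `Q₀`, then
`|M₂f(x) − M₂f(y)| ≤ C(n) c⁻¹ log c` for all `x, y ∈ Q₀`. -/
theorem nonlocal_maximal_oscillation (n : ℕ) (hn : 1 ≤ n) :
    ∃ C : ℝ, 0 < C ∧
      ∀ (f : (Fin n → ℝ) → ℝ), LocallyIntegrable f volume → (∀ x, 0 ≤ f x) →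
        bmoN f ≤ 1 →
      ∀ (a₀ : Fin n → ℝ) (l₀ : ℝ), 0 < l₀ →
      ∀ c : ℝ, Real.exp 1 < c →
        ((∀ x ∈ cube a₀ l₀, ∀ y ∈ cube a₀ l₀,
          ∀ (a : Fin n → ℝ) (l : ℝ), c * l₀ ≤ l → x ∈ cube a l →
            ENNReal.ofReal (⨍ t in cube a l, f t) ≤
              nonlocalMax f c l₀ y + ENNReal.ofReal (C * c⁻¹ * Real.log c)) ∧
        ((∀ z ∈ cube a₀ l₀, nonlocalMax f c l₀ z ≠ ⊤) →
          ∀ x ∈ cube a₀ l₀, ∀ y ∈ cube a₀ l₀,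
            |(nonlocalMax f c l₀ x).toReal - (nonlocalMax f c l₀ y).toReal| ≤
              C * c⁻¹ * Real.log c)) :=
  nonlocal_maximal_oscillation_general n
end

section
/- There exist absolute constants 0 < C₁ ≤ C₂ such that for all locally integrable φ, ψ : ℝ → ℝ, the function f(x,y) = φ(x)ψ(y) satisfies C₁·S ≤ ‖f‖_{BMO(ℝ²)} ≤ C₂·S (as an equality of values in [0,∞]), where S = sup_{δ>0} [ (sup_{|I|=δ} (1/|I|)∫_I |φ|) · (sup_{|J|=δ} O(ψ,J)) + (sup_{|I|=δ} O(φ,I)) · (sup_{|J|=δ} (1/|J|)∫_J |ψ|) ], the inner suprema being over closed intervals I, J of length δ. -/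
/-! For a square `I × J` with means `m_φ = ⨍_I φ`, `m_ψ = ⨍_J ψ`, the splitting
`φ(x)ψ(y) - m_φ m_ψ = φ(x)(ψ(y) - m_ψ) + (φ(x) - m_φ) m_ψ` and `|m_ψ| ≤ ⨍_J |ψ|` give the upper
bound with `C₂ = 1`. For the lower bound, replacing the mean by an arbitrary constant `c` at most
doubles a mean oscillation; so for fixed `x` the average over `J` of `|φ(x)ψ(y) - c|` is at least
`|φ(x)| O(ψ,J) / 2`, and averaging over `x` (and symmetrically over `y`) gives `C₁ = 1/4`. -/

open MeasureTheory Set Filter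
open scoped ENNReal Topology

/-- Mean oscillation of `f : ℝ → ℝ` over `A ⊆ ℝ`. -/
noncomputable def osc1 (f : ℝ → ℝ) (A : Set ℝ) : ℝ :=
  ⨍ x in A, |f x - ⨍ y in A, f y|

/-- Mean oscillation of `f : ℝ × ℝ → ℝ` over `E ⊆ ℝ²`. -/
noncomputable def osc2 (f : ℝ × ℝ → ℝ) (E : Set (ℝ × ℝ)) : ℝ :=
  ⨍ p in E, |f p - ⨍ q in E, f q|

/-- BMO(ℝ²) seminorm: supremum of mean oscillations over closed axis-parallel squares
of positive side length. -/
noncomputable def bmo2 (f : ℝ × ℝ → ℝ) : ℝ≥0∞ :=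
  ⨆ (a : ℝ) (b : ℝ) (l : ℝ) (_ : 0 < l),
    ENNReal.ofReal (osc2 f (Icc a (a + l) ×ˢ Icc b (b + l)))

open ProbabilityTheory

/-- Meant for probability measures, where it is the mean oscillation; on a set `A ⊆ ℝ` the measure
is the normalised Lebesgue measure `volume[|A]`. -/
noncomputable def meanOsc {α : Type*} [MeasurableSpace α] (f : α → ℝ) (μ : Measure α) : ℝ :=
  ∫ x, |f x - ∫ y, f y ∂μ| ∂μ

section MeanOscillation

variable {α β : Type*} [MeasurableSpace α] [MeasurableSpace β]

theorem meanOsc_nonneg (f : α → ℝ) (μ : Measure α) : 0 ≤ meanOsc f μ :=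
  integral_nonneg fun _ => abs_nonneg _

theorem meanOsc_const_mul (t : ℝ) (f : α → ℝ) (μ : Measure α) :
    meanOsc (fun x => t * f x) μ = |t| * meanOsc f μ := by
  simp only [meanOsc, integral_const_mul, ← mul_sub, abs_mul]

variable {P : Measure α} {Q : Measure β} [IsProbabilityMeasure P] [IsProbabilityMeasure Q]

theorem meanOsc_le_two_mul_integral_abs_sub {f : α → ℝ} (hf : Integrable f P) (c : ℝ) :
    meanOsc f P ≤ 2 * ∫ x, |f x - c| ∂P := by
  have hdev : Integrable (fun x => |f x - c|) P := (hf.sub (integrable_const c)).abs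
  have hmean : |c - ∫ y, f y ∂P| ≤ ∫ x, |f x - c| ∂P :=
    calc |c - ∫ y, f y ∂P| = |∫ x, (f x - c) ∂P| := by
          rw [integral_sub hf (integrable_const c), integral_const, probReal_univ, one_smul,
            abs_sub_comm]
      _ ≤ ∫ x, |f x - c| ∂P := abs_integral_le_integral_abs
  calc meanOsc f P ≤ ∫ x, (|f x - c| + |c - ∫ y, f y ∂P|) ∂P :=
        integral_mono (hf.sub (integrable_const _)).abs (hdev.add (integrable_const _))
          fun x => abs_sub_le _ _ _
    _ = (∫ x, |f x - c| ∂P) + |c - ∫ y, f y ∂P| := by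
        rw [integral_add hdev (integrable_const _), integral_const, probReal_univ, one_smul]
    _ ≤ 2 * ∫ x, |f x - c| ∂P := by linarith

theorem integral_abs_mul_meanOsc_le {φ : α → ℝ} {ψ : β → ℝ} (hφ : Integrable φ P)
    (hψ : Integrable ψ Q) (c : ℝ) :
    (∫ x, |φ x| ∂P) * meanOsc ψ Q ≤ 2 * ∫ z, |φ z.1 * ψ z.2 - c| ∂(P.prod Q) := by
  have hdev : Integrable (fun z : α × β => |φ z.1 * ψ z.2 - c|) (P.prod Q) :=
    ((hφ.mul_prod hψ).sub (integrable_const c)).abs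
  calc (∫ x, |φ x| ∂P) * meanOsc ψ Q = ∫ x, |φ x| * meanOsc ψ Q ∂P := (integral_mul_const _ _).symm
    _ ≤ ∫ x, 2 * ∫ y, |φ x * ψ y - c| ∂Q ∂P :=
        integral_mono (hφ.abs.mul_const _) (hdev.integral_prod_left.const_mul 2) fun x =>
          (meanOsc_const_mul (φ x) ψ Q).symm.trans_le
            (meanOsc_le_two_mul_integral_abs_sub (hψ.const_mul _) c)
    _ = 2 * ∫ z, |φ z.1 * ψ z.2 - c| ∂(P.prod Q) := by rw [integral_const_mul, integral_prod _ hdev]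

theorem meanOsc_mul_integral_abs_le {φ : α → ℝ} {ψ : β → ℝ} (hφ : Integrable φ P)
    (hψ : Integrable ψ Q) (c : ℝ) :
    meanOsc φ P * ∫ y, |ψ y| ∂Q ≤ 2 * ∫ z, |φ z.1 * ψ z.2 - c| ∂(P.prod Q) := by
  rw [mul_comm, ← integral_prod_swap (fun z : α × β => |φ z.1 * ψ z.2 - c|)]
  simpa only [Prod.fst_swap, Prod.snd_swap, mul_comm (ψ _)] using
    integral_abs_mul_meanOsc_le hψ hφ c

theorem meanOsc_prod_mul_le {φ : α → ℝ} {ψ : β → ℝ} (hφ : Integrable φ P) (hψ : Integrable ψ Q) :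
    meanOsc (fun z : α × β => φ z.1 * ψ z.2) (P.prod Q)
      ≤ (∫ x, |φ x| ∂P) * meanOsc ψ Q + meanOsc φ P * ∫ y, |ψ y| ∂Q := by
  set mφ := ∫ x, φ x ∂P
  set mψ := ∫ y, ψ y ∂Q
  have h₁ : Integrable (fun z : α × β => |φ z.1| * |ψ z.2 - mψ|) (P.prod Q) :=
    hφ.abs.mul_prod (hψ.sub (integrable_const _)).abs
  have h₂ : Integrable (fun z : α × β => |φ z.1 - mφ| * |mψ|) (P.prod Q) :=
    (hφ.sub (integrable_const _)).abs.mul_prod (integrable_const _)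
  calc meanOsc (fun z : α × β => φ z.1 * ψ z.2) (P.prod Q)
      = ∫ z, |φ z.1 * ψ z.2 - mφ * mψ| ∂(P.prod Q) := by rw [meanOsc, integral_prod_mul φ ψ]
    _ ≤ ∫ z, (|φ z.1| * |ψ z.2 - mψ| + |φ z.1 - mφ| * |mψ|) ∂(P.prod Q) := by
        refine integral_mono ((hφ.mul_prod hψ).sub (integrable_const _)).abs (h₁.add h₂) fun z => ?_
        calc |φ z.1 * ψ z.2 - mφ * mψ| = |φ z.1 * (ψ z.2 - mψ) + (φ z.1 - mφ) * mψ| := by ring_nf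
          _ ≤ _ := (abs_add_le _ _).trans_eq (by rw [abs_mul, abs_mul])
    _ = (∫ x, |φ x| ∂P) * meanOsc ψ Q + meanOsc φ P * |mψ| := by
        rw [integral_add h₁ h₂, integral_prod_mul (fun x => |φ x|) (fun y => |ψ y - mψ|),
          integral_prod_mul (fun x => |φ x - mφ|) (fun _ => |mψ|), integral_const, probReal_univ,
          one_smul, meanOsc, meanOsc]
    _ ≤ (∫ x, |φ x| ∂P) * meanOsc ψ Q + meanOsc φ P * ∫ y, |ψ y| ∂Q := by
        gcongr
        · exact meanOsc_nonneg φ P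
        · exact abs_integral_le_integral_abs

end MeanOscillation

namespace ProbabilityTheory

theorem prod_cond {α β : Type*} [MeasurableSpace α] [MeasurableSpace β] {μ : Measure α}
    {ν : Measure β} [SFinite μ] [SFinite ν] {s : Set α} {t : Set β} (hs : μ s ≠ ∞) (ht : ν t ≠ ∞) :
    μ[|s].prod ν[|t] = (μ.prod ν)[|s ×ˢ t] := by
  rw [cond, cond, cond, Measure.prod_smul_left, Measure.prod_smul_right, smul_smul,
    Measure.prod_restrict, Measure.prod_prod, ENNReal.mul_inv (.inr ht) (.inl hs), mul_comm]

theorem isProbabilityMeasure_volume_cond_Icc {a b : ℝ} (hab : a < b) :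
    IsProbabilityMeasure volume[|Icc a b] :=
  cond_isProbabilityMeasure_of_finite (by simp [hab]) (by simp)

end ProbabilityTheory

theorem MeasureTheory.LocallyIntegrable.integrable_cond {α E : Type*} [MeasurableSpace α]
    [TopologicalSpace α] [NormedAddCommGroup E] {μ : Measure α} {f : α → E}
    (hf : LocallyIntegrable f μ) {K : Set α} (hK : IsCompact K) (hK₀ : μ K ≠ 0) :
    Integrable f μ[|K] :=
  (hf.integrableOn_isCompact hK).smul_measure (ENNReal.inv_ne_top.2 hK₀)

theorem setAverage_eq_integral_cond {α E : Type*} [MeasurableSpace α] [NormedAddCommGroup E]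
    [NormedSpace ℝ E] (μ : Measure α) (f : α → E) (s : Set α) :
    ⨍ x in s, f x ∂μ = ∫ x, f x ∂μ[|s] :=
  setAverage_eq' μ f s

theorem setAverage_abs_nonneg {α : Type*} [MeasurableSpace α] (μ : Measure α) (f : α → ℝ)
    (s : Set α) : 0 ≤ ⨍ x in s, |f x| ∂μ :=
  integral_nonneg fun _ => abs_nonneg _

theorem osc1_eq_meanOsc (f : ℝ → ℝ) (A : Set ℝ) : osc1 f A = meanOsc f volume[|A] := by
  simp only [osc1, meanOsc, setAverage_eq_integral_cond]

theorem osc1_nonneg (f : ℝ → ℝ) (A : Set ℝ) : 0 ≤ osc1 f A :=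
  setAverage_abs_nonneg _ _ A

theorem osc2_prod_eq_meanOsc (f : ℝ × ℝ → ℝ) {A B : Set ℝ} (hA : volume A ≠ ∞)
    (hB : volume B ≠ ∞) : osc2 f (A ×ˢ B) = meanOsc f (volume[|A].prod volume[|B]) := by
  rw [prod_cond hA hB, ← Measure.volume_eq_prod]
  simp only [osc2, meanOsc, setAverage_eq_integral_cond]

theorem ENNReal.iSup_mul_iSup_le {ι κ : Sort*} {f : ι → ℝ≥0∞} {g : κ → ℝ≥0∞} {c : ℝ≥0∞}
    (h : ∀ i j, f i * g j ≤ c) : (⨆ i, f i) * (⨆ j, g j) ≤ c := by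
  rw [ENNReal.iSup_mul]
  exact iSup_le fun i => (ENNReal.mul_iSup ..).trans_le (iSup_le (h i))

noncomputable def intervalAvgAbsSup (φ : ℝ → ℝ) (δ : ℝ) : ℝ≥0∞ :=
  ⨆ a : ℝ, ENNReal.ofReal (⨍ t in Icc a (a + δ), |φ t|)

noncomputable def intervalOscSup (φ : ℝ → ℝ) (δ : ℝ) : ℝ≥0∞ :=
  ⨆ a : ℝ, ENNReal.ofReal (osc1 φ (Icc a (a + δ)))

noncomputable def productBMOBound (φ ψ : ℝ → ℝ) : ℝ≥0∞ :=
  ⨆ (δ : ℝ) (_ : 0 < δ),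
    intervalAvgAbsSup φ δ * intervalOscSup ψ δ + intervalOscSup φ δ * intervalAvgAbsSup ψ δ

section Squares

variable {φ ψ : ℝ → ℝ} {a b δ : ℝ}

theorem ofReal_osc2_le_bmo2 (f : ℝ × ℝ → ℝ) (hδ : 0 < δ) :
    ENNReal.ofReal (osc2 f (Icc a (a + δ) ×ˢ Icc b (b + δ))) ≤ bmo2 f :=
  le_iSup_of_le a <| le_iSup_of_le b <| le_iSup₂_of_le δ hδ le_rfl

theorem ofReal_le_two_mul_bmo2 {f : ℝ × ℝ → ℝ} {x : ℝ} (hδ : 0 < δ)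
    (hx : x ≤ 2 * osc2 f (Icc a (a + δ) ×ˢ Icc b (b + δ))) : ENNReal.ofReal x ≤ 2 * bmo2 f :=
  calc ENNReal.ofReal x ≤ 2 * ENNReal.ofReal (osc2 f (Icc a (a + δ) ×ˢ Icc b (b + δ))) := by
        rw [← ENNReal.ofReal_ofNat 2, ← ENNReal.ofReal_mul zero_le_two]
        exact ENNReal.ofReal_le_ofReal hx
    _ ≤ 2 * bmo2 f := by gcongr; exact ofReal_osc2_le_bmo2 f hδ

theorem setAverage_abs_mul_osc1_le (hφ : LocallyIntegrable φ) (hψ : LocallyIntegrable ψ)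
    (hδ : 0 < δ) :
    (⨍ t in Icc a (a + δ), |φ t|) * osc1 ψ (Icc b (b + δ))
      ≤ 2 * osc2 (fun p => φ p.1 * ψ p.2) (Icc a (a + δ) ×ˢ Icc b (b + δ)) := by
  have := isProbabilityMeasure_volume_cond_Icc (lt_add_of_pos_right a hδ)
  have := isProbabilityMeasure_volume_cond_Icc (lt_add_of_pos_right b hδ)
  rw [setAverage_eq_integral_cond, osc1_eq_meanOsc, osc2_prod_eq_meanOsc _ (by simp) (by simp)]
  exact integral_abs_mul_meanOsc_le (hφ.integrable_cond isCompact_Icc (by simp [hδ]))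
    (hψ.integrable_cond isCompact_Icc (by simp [hδ])) _

theorem osc1_mul_setAverage_abs_le (hφ : LocallyIntegrable φ) (hψ : LocallyIntegrable ψ)
    (hδ : 0 < δ) :
    osc1 φ (Icc a (a + δ)) * (⨍ t in Icc b (b + δ), |ψ t|)
      ≤ 2 * osc2 (fun p => φ p.1 * ψ p.2) (Icc a (a + δ) ×ˢ Icc b (b + δ)) := by
  have := isProbabilityMeasure_volume_cond_Icc (lt_add_of_pos_right a hδ)
  have := isProbabilityMeasure_volume_cond_Icc (lt_add_of_pos_right b hδ)
  rw [setAverage_eq_integral_cond, osc1_eq_meanOsc, osc2_prod_eq_meanOsc _ (by simp) (by simp)]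
  exact meanOsc_mul_integral_abs_le (hφ.integrable_cond isCompact_Icc (by simp [hδ]))
    (hψ.integrable_cond isCompact_Icc (by simp [hδ])) _

theorem osc2_prod_mul_le (hφ : LocallyIntegrable φ) (hψ : LocallyIntegrable ψ) (hδ : 0 < δ) :
    osc2 (fun p => φ p.1 * ψ p.2) (Icc a (a + δ) ×ˢ Icc b (b + δ))
      ≤ (⨍ t in Icc a (a + δ), |φ t|) * osc1 ψ (Icc b (b + δ))
        + osc1 φ (Icc a (a + δ)) * (⨍ t in Icc b (b + δ), |ψ t|) := by
  have := isProbabilityMeasure_volume_cond_Icc (lt_add_of_pos_right a hδ)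
  have := isProbabilityMeasure_volume_cond_Icc (lt_add_of_pos_right b hδ)
  simp only [setAverage_eq_integral_cond, osc1_eq_meanOsc]
  rw [osc2_prod_eq_meanOsc _ (by simp) (by simp)]
  exact meanOsc_prod_mul_le (hφ.integrable_cond isCompact_Icc (by simp [hδ]))
    (hψ.integrable_cond isCompact_Icc (by simp [hδ]))

theorem intervalAvgAbsSup_mul_intervalOscSup_le (hφ : LocallyIntegrable φ)
    (hψ : LocallyIntegrable ψ) (hδ : 0 < δ) :
    intervalAvgAbsSup φ δ * intervalOscSup ψ δ ≤ 2 * bmo2 (fun p => φ p.1 * ψ p.2) :=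
  ENNReal.iSup_mul_iSup_le fun a b => by
    rw [← ENNReal.ofReal_mul (setAverage_abs_nonneg ..)]
    exact ofReal_le_two_mul_bmo2 hδ (setAverage_abs_mul_osc1_le hφ hψ hδ)

theorem intervalOscSup_mul_intervalAvgAbsSup_le (hφ : LocallyIntegrable φ)
    (hψ : LocallyIntegrable ψ) (hδ : 0 < δ) :
    intervalOscSup φ δ * intervalAvgAbsSup ψ δ ≤ 2 * bmo2 (fun p => φ p.1 * ψ p.2) :=
  ENNReal.iSup_mul_iSup_le fun a b => by
    rw [← ENNReal.ofReal_mul (osc1_nonneg ..)]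
    exact ofReal_le_two_mul_bmo2 hδ (osc1_mul_setAverage_abs_le hφ hψ hδ)

theorem productBMOBound_le_four_mul_bmo2 (hφ : LocallyIntegrable φ) (hψ : LocallyIntegrable ψ) :
    productBMOBound φ ψ ≤ 4 * bmo2 (fun p => φ p.1 * ψ p.2) :=
  iSup₂_le fun _ hδ => (add_le_add (intervalAvgAbsSup_mul_intervalOscSup_le hφ hψ hδ)
    (intervalOscSup_mul_intervalAvgAbsSup_le hφ hψ hδ)).trans_eq (by ring)

theorem bmo2_mul_le_productBMOBound (hφ : LocallyIntegrable φ) (hψ : LocallyIntegrable ψ) :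
    bmo2 (fun p => φ p.1 * ψ p.2) ≤ productBMOBound φ ψ :=
  iSup_le fun a => iSup_le fun b => iSup₂_le fun δ hδ =>
    calc ENNReal.ofReal (osc2 (fun p => φ p.1 * ψ p.2) (Icc a (a + δ) ×ˢ Icc b (b + δ)))
        ≤ ENNReal.ofReal ((⨍ t in Icc a (a + δ), |φ t|) * osc1 ψ (Icc b (b + δ))
            + osc1 φ (Icc a (a + δ)) * (⨍ t in Icc b (b + δ), |ψ t|)) :=
          ENNReal.ofReal_le_ofReal (osc2_prod_mul_le hφ hψ hδ)
      _ = ENNReal.ofReal (⨍ t in Icc a (a + δ), |φ t|) * ENNReal.ofReal (osc1 ψ (Icc b (b + δ)))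
            + ENNReal.ofReal (osc1 φ (Icc a (a + δ)))
              * ENNReal.ofReal (⨍ t in Icc b (b + δ), |ψ t|) := by
          rw [ENNReal.ofReal_add (mul_nonneg (setAverage_abs_nonneg ..) (osc1_nonneg ..))
            (mul_nonneg (osc1_nonneg ..) (setAverage_abs_nonneg ..)),
            ENNReal.ofReal_mul (setAverage_abs_nonneg ..), ENNReal.ofReal_mul (osc1_nonneg ..)]
      _ ≤ intervalAvgAbsSup φ δ * intervalOscSup ψ δ
            + intervalOscSup φ δ * intervalAvgAbsSup ψ δ := by
          unfold intervalAvgAbsSup intervalOscSup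
          gcongr <;> exact le_iSup_of_le _ le_rfl
      _ ≤ productBMOBound φ ψ := le_iSup₂_of_le δ hδ le_rfl

end Squares

/-- there are absolute constants `0 < C₁ ≤ C₂` such that for all locally
integrable `φ, ψ : ℝ → ℝ`, the function `f(x,y) = φ(x)ψ(y)` satisfies
`C₁·S ≤ ‖f‖_{BMO(ℝ²)} ≤ C₂·S` in `[0,∞]`, where
`S = sup_{δ>0} [ (sup_{|I|=δ} ⨍_I|φ|)(sup_{|J|=δ} O(ψ,J)) + (sup_{|I|=δ} O(φ,I))(sup_{|J|=δ} ⨍_J|ψ|) ]`. -/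
theorem bmo_product_characterization :
    ∃ C₁ C₂ : ℝ, 0 < C₁ ∧ C₁ ≤ C₂ ∧
      ∀ φ ψ : ℝ → ℝ, LocallyIntegrable φ volume → LocallyIntegrable ψ volume →
        (ENNReal.ofReal C₁ *
          (⨆ (δ : ℝ) (_ : 0 < δ),
            ((⨆ a : ℝ, ENNReal.ofReal (⨍ t in Icc a (a + δ), |φ t|)) *
              (⨆ b : ℝ, ENNReal.ofReal (osc1 ψ (Icc b (b + δ)))) +
             (⨆ a : ℝ, ENNReal.ofReal (osc1 φ (Icc a (a + δ)))) *
              (⨆ b : ℝ, ENNReal.ofReal (⨍ t in Icc b (b + δ), |ψ t|)))) ≤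
          bmo2 (fun p => φ p.1 * ψ p.2)) ∧
        (bmo2 (fun p => φ p.1 * ψ p.2) ≤
          ENNReal.ofReal C₂ *
          (⨆ (δ : ℝ) (_ : 0 < δ),
            ((⨆ a : ℝ, ENNReal.ofReal (⨍ t in Icc a (a + δ), |φ t|)) *
              (⨆ b : ℝ, ENNReal.ofReal (osc1 ψ (Icc b (b + δ)))) +
             (⨆ a : ℝ, ENNReal.ofReal (osc1 φ (Icc a (a + δ)))) *
              (⨆ b : ℝ, ENNReal.ofReal (⨍ t in Icc b (b + δ), |ψ t|))))) := by
  refine ⟨1 / 4, 1, by norm_num, by norm_num, fun φ ψ hφ hψ => ⟨?_, ?_⟩⟩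
  · calc ENNReal.ofReal (1 / 4) * productBMOBound φ ψ
        ≤ ENNReal.ofReal (1 / 4) * (4 * bmo2 (fun p => φ p.1 * ψ p.2)) :=
          mul_le_mul_right (productBMOBound_le_four_mul_bmo2 hφ hψ) _
      _ = bmo2 (fun p => φ p.1 * ψ p.2) := by
          rw [← mul_assoc, ← ENNReal.ofReal_ofNat 4, ← ENNReal.ofReal_mul (by norm_num)]
          norm_num
  · rw [ENNReal.ofReal_one, one_mul]
    exact bmo2_mul_le_productBMOBound hφ hψ
end
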